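/- arXiv:2405.11107 — 7 statements merged into one kernel-verified Lean document; each statement's English description precedes it below -/
import Mathlib

section
/- Under the Hilbert-space descent setup, assume additionally ‖u‖_X ≤ C·‖u‖_H for all u ∈ H (uniform comparability of the two norms), and let u* ∈ H be a global minimizer of F. Then for every u ∈ H the key contraction inequality holds: F(u − (1/(C²·M))·G(u)) − F(u*) ≤ (1 − m/(C⁴·M))·(F(u) − F(u*)). -/
lemma bform_cauchy {H : Type*} [AddCommGroup H] [Module ℝ H]
    (b : H →ₗ[ℝ] H →ₗ[ℝ] ℝ) (hsymm : ∀ u v, b u v = b v u)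
    (hnonneg : ∀ u, 0 ≤ b u u) (x y : H) :
    b x y ≤ Real.sqrt (b x x) * Real.sqrt (b y y) := by
  have hsq : (b x y)^2 ≤ b x x * b y y := by
    have h : ∀ t : ℝ, 0 ≤ (b y y) * (t * t) + (2 * b x y) * t + b x x := by
      intro t
      have h0 := hnonneg (x + t • y)
      simp only [map_add, map_smul, LinearMap.add_apply, LinearMap.smul_apply,
        smul_eq_mul, hsymm y x] at h0
      nlinarith [h0]
    have hd := discrim_le_zero h
    rw [discrim] at hd
    nlinarith [hd]
  calc b x y ≤ |b x y| := le_abs_self _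
    _ = Real.sqrt ((b x y)^2) := (Real.sqrt_sq_eq_abs _).symm
    _ ≤ Real.sqrt (b x x * b y y) := Real.sqrt_le_sqrt hsq
    _ = Real.sqrt (b x x) * Real.sqrt (b y y) := Real.sqrt_mul (hnonneg x) _

/-- Hilbert-space descent setup with uniformly comparable norms;
key contraction inequality for gradient descent with exact-type step 1/(C²M):
F(u − (1/(C²M))·∇_X F(u)) − F(u*) ≤ (1 − m/(C⁴M))·(F(u) − F(u*)). -/
theorem key_contraction_inequality_exact_step
    {H : Type*} [NormedAddCommGroup H] [InnerProductSpace ℝ H] [CompleteSpace H]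
    (b : H →ₗ[ℝ] H →ₗ[ℝ] ℝ)
    (hsymm : ∀ u v : H, b u v = b v u)
    (hnonneg : ∀ u : H, 0 ≤ b u u)
    (C : ℝ) (hC : 0 < C)
    (hnorm : ∀ u : H, ‖u‖ ≤ C * Real.sqrt (b u u))
    (hnorm' : ∀ u : H, Real.sqrt (b u u) ≤ C * ‖u‖)
    (F : H → ℝ) (hF : Differentiable ℝ F)
    (m M : ℝ) (hm : 0 < m) (hM : 0 < M)
    (hlow : ∀ u v : H, m / 2 * ‖v - u‖^2 ≤ F v - F u - fderiv ℝ F u (v - u))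
    (hup : ∀ u v : H, F v - F u - fderiv ℝ F u (v - u) ≤ M / 2 * ‖v - u‖^2)
    (G : H → H) (hG : ∀ u φ : H, fderiv ℝ F u φ = b (G u) φ)
    (ustar : H) (hmin : ∀ v : H, F ustar ≤ F v) :
    ∀ u : H,
      F (u - (1 / (C^2 * M)) • G u) - F ustar
        ≤ (1 - m / (C^4 * M)) * (F u - F ustar) := by
  intro u
  set τ : ℝ := 1 / (C^2 * M) with hτ
  have hτpos : 0 < τ := by rw [hτ]; positivity
  set g := G u with hg
  set v := u - τ • g with hv
  have hgg : 0 ≤ b g g := hnonneg g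
  have hvu : v - u = -(τ • g) := by rw [hv]; abel
  have hfd : fderiv ℝ F u (v - u) = -(τ * b g g) := by
    rw [hG, hvu]
    simp [smul_eq_mul, ← hg]
  have hng : ‖g‖^2 ≤ C^2 * b g g := by
    have h1 := hnorm g
    have h2 : Real.sqrt (b g g)^2 = b g g := Real.sq_sqrt hgg
    nlinarith [norm_nonneg g, Real.sqrt_nonneg (b g g)]
  -- Step A: descent amount
  have hnv : ‖v - u‖^2 = τ^2 * ‖g‖^2 := by
    rw [hvu, norm_neg, norm_smul, Real.norm_eq_abs, abs_of_pos hτpos, mul_pow]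
  have hMτ : M / 2 * (τ^2 * C^2) = τ / 2 := by
    rw [hτ]; field_simp
  have stepA : F v - F u ≤ -(τ/2) * b g g := by
    have h := hup u v
    rw [hfd, hnv] at h
    nlinarith [mul_le_mul_of_nonneg_left hng (by positivity : (0:ℝ) ≤ M/2 * τ^2)]
  -- Step B: gradient dominates suboptimality
  have hfd2 : fderiv ℝ F u (ustar - u) = - b g (u - ustar) := by
    rw [hG]
    have h : ustar - u = -(u - ustar) := by abel
    rw [h, map_neg]
  have hcs : b g (u - ustar) ≤ Real.sqrt (b g g) * (C * ‖u - ustar‖) := by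
    calc b g (u - ustar)
        ≤ Real.sqrt (b g g) * Real.sqrt (b (u - ustar) (u - ustar)) :=
          bform_cauchy b hsymm hnonneg g (u - ustar)
      _ ≤ Real.sqrt (b g g) * (C * ‖u - ustar‖) := by
          apply mul_le_mul_of_nonneg_left (hnorm' _) (Real.sqrt_nonneg _)
  have stepB : 2 * m * (F u - F ustar) ≤ C^2 * b g g := by
    have hw := hlow u ustar
    rw [hfd2] at hw
    have hnw : ‖ustar - u‖ = ‖u - ustar‖ := norm_sub_rev _ _
    rw [hnw] at hw
    have hs2 : Real.sqrt (b g g)^2 = b g g := Real.sq_sqrt hgg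
    nlinarith [hw, hcs, sq_nonneg (C * Real.sqrt (b g g) - m * ‖u - ustar‖),
      Real.sqrt_nonneg (b g g), norm_nonneg (u - ustar)]
  -- Combine
  have hΔ : 0 ≤ F u - F ustar := by linarith [hmin u]
  have hbgg : 2 * m * (F u - F ustar) / C^2 ≤ b g g := by
    rw [div_le_iff₀ (by positivity)]
    nlinarith [stepB]
  have heq : τ/2 * (2 * m * (F u - F ustar) / C^2) = m / (C^4 * M) * (F u - F ustar) := by
    rw [hτ]; field_simp
  have h2 : m / (C^4 * M) * (F u - F ustar) ≤ τ/2 * b g g := by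
    rw [← heq]
    exact mul_le_mul_of_nonneg_left hbgg (by positivity)
  have : F v - F ustar ≤ (F u - F ustar) - m / (C^4 * M) * (F u - F ustar) := by
    linarith [stepA, h2]
  linarith [this]
end

section
/- Under the Hilbert-space descent setup, for every α ∈ (0, 1/2), every u ∈ H, and every step size t with 0 ≤ t ≤ 1/(C²·M), the backtracking exit condition holds: F(u − t·G(u)) ≤ F(u) − α·t·b(G(u), G(u)). -/
/-- Hilbert-space descent setup; for α ∈ (0,1/2) and any step size
t ∈ [0, 1/(C²M)], the backtracking exit condition holds:
F(u − t·∇_X F(u)) ≤ F(u) − α·t·‖∇_X F(u)‖_X². -/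
theorem backtracking_exit_condition_holds
    {H : Type*} [NormedAddCommGroup H] [InnerProductSpace ℝ H] [CompleteSpace H]
    (b : H →ₗ[ℝ] H →ₗ[ℝ] ℝ)
    (hsymm : ∀ u v : H, b u v = b v u)
    (hnonneg : ∀ u : H, 0 ≤ b u u)
    (C : ℝ) (hC : 0 < C)
    (hnorm : ∀ u : H, ‖u‖ ≤ C * Real.sqrt (b u u))
    (F : H → ℝ) (hF : Differentiable ℝ F)
    (m M : ℝ) (hm : 0 < m) (hM : 0 < M)
    (hlow : ∀ u v : H, m / 2 * ‖v - u‖^2 ≤ F v - F u - fderiv ℝ F u (v - u))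
    (hup : ∀ u v : H, F v - F u - fderiv ℝ F u (v - u) ≤ M / 2 * ‖v - u‖^2)
    (G : H → H) (hG : ∀ u φ : H, fderiv ℝ F u φ = b (G u) φ) :
    ∀ α ∈ Set.Ioo (0 : ℝ) (1/2), ∀ u : H, ∀ t : ℝ,
      0 ≤ t → t ≤ 1 / (C^2 * M) →
      F (u - t • G u) ≤ F u - α * t * b (G u) (G u) := by
  intro α hα u t ht0 ht1
  obtain ⟨hα0, hα2⟩ := hα
  set g := G u with hg
  set B := b g g with hB
  have hBnn : 0 ≤ B := hnonneg g
  have key := hup u (u - t • g)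
  have hdiff : u - t • g - u = -(t • g) := by abel
  rw [hdiff] at key
  have hder : fderiv ℝ F u (-(t • g)) = -(t * B) := by
    rw [map_neg, map_smul, hG]
    simp [hB, ← hg, mul_comm]
  rw [hder] at key
  have hnormsq : ‖(-(t • g))‖^2 ≤ t^2 * (C^2 * B) := by
    rw [norm_neg, norm_smul]
    have h1 : ‖g‖ ≤ C * Real.sqrt B := hnorm g
    have h2 : ‖g‖^2 ≤ (C * Real.sqrt B)^2 :=
      pow_le_pow_left₀ (norm_nonneg g) h1 2
    rw [mul_pow, Real.sq_sqrt hBnn] at h2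
    calc (‖t‖ * ‖g‖)^2 = t^2 * ‖g‖^2 := by
          rw [mul_pow, Real.norm_eq_abs, sq_abs]
      _ ≤ t^2 * (C^2 * B) := by
          apply mul_le_mul_of_nonneg_left h2 (sq_nonneg t)
  have hMC : 0 < C^2 * M := by positivity
  have htCM : t * (C^2 * M) ≤ 1 := by
    rw [div_eq_inv_mul] at ht1
    simp only [mul_one] at ht1
    calc t * (C^2 * M) ≤ (C^2 * M)⁻¹ * (C^2 * M) :=
          mul_le_mul_of_nonneg_right ht1 hMC.le
      _ = 1 := inv_mul_cancel₀ hMC.ne'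
  -- F(u - t g) ≤ F u - t B + M/2 * t² C² B
  have hmain : F (u - t • g) ≤ F u - t * B + M / 2 * (t^2 * (C^2 * B)) := by
    have := mul_le_mul_of_nonneg_left hnormsq (by linarith : (0:ℝ) ≤ M / 2)
    linarith
  -- suffices: -tB + M/2 t² C² B ≤ -α t B
  have hfin : F u - t * B + M / 2 * (t^2 * (C^2 * B)) ≤ F u - α * t * B := by
    have h3 : M / 2 * (t^2 * (C^2 * B)) = (t * (C^2 * M)) * (t * B) / 2 := by ring
    have htB : 0 ≤ t * B := mul_nonneg ht0 hBnn
    have h4 : (t * (C^2 * M)) * (t * B) ≤ 1 * (t * B) :=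
      mul_le_mul_of_nonneg_right htCM htB
    nlinarith
  linarith
end

section
/- Under the Hilbert-space descent setup, assume additionally ‖u‖_X ≤ C·‖u‖_H for all u ∈ H (uniform comparability of the two norms), and let u* ∈ H be a global minimizer of F. Then for every α ∈ (0, 1/2), every u ∈ H, and every t > 0 satisfying the backtracking exit condition F(u − t·G(u)) ≤ F(u) − α·t·b(G(u), G(u)), one has the contraction F(u − t·G(u)) − F(u*) ≤ (1 − (2·α·m/C²)·t)·(F(u) − F(u*)). -/
lemma cs_aux {H : Type*} [NormedAddCommGroup H] [InnerProductSpace ℝ H]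
    (b : H →ₗ[ℝ] H →ₗ[ℝ] ℝ)
    (hsymm : ∀ u v : H, b u v = b v u)
    (hnonneg : ∀ u : H, 0 ≤ b u u) (x y : H) :
    (b x y)^2 ≤ b x x * b y y := by
  by_cases h : b y y = 0
  · have hxy : b x y = 0 := by
      by_contra hne
      set l : ℝ := (b x x + 1) * b x y / (2 * (b x y)^2) with hl
      have hnn := hnonneg (x - l • y)
      simp only [map_sub, map_smul, LinearMap.sub_apply, LinearMap.smul_apply,
        smul_eq_mul, hsymm y x, h, mul_zero, sub_zero] at hnn
      have hlb : l * b x y = (b x x + 1) / 2 := by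
        rw [hl]; field_simp
      nlinarith [hnn, hlb]
    rw [hxy, h]; norm_num
  · have hpos : 0 < b y y := lt_of_le_of_ne (hnonneg y) (Ne.symm h)
    have hnn := hnonneg (x - (b x y / b y y) • y)
    simp only [map_sub, map_smul, LinearMap.sub_apply, LinearMap.smul_apply,
      smul_eq_mul, hsymm y x] at hnn
    have h2 := mul_le_mul_of_nonneg_left hnn hpos.le
    have hne : b y y ≠ 0 := h
    have e : b y y * (b x x - b x y / b y y * b x y -
        b x y / b y y * (b x y - b x y / b y y * b y y)) =
        b y y * b x x - (b x y)^2 := by field_simp; ring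
    nlinarith [h2, e]

set_option maxHeartbeats 1600000 in
/-- Hilbert-space descent setup with uniformly comparable norms and
a global minimizer u*; for α ∈ (0,1/2) and any t > 0 satisfying the backtracking
exit condition, F(u − t·G(u)) − F(u*) ≤ (1 − (2αm/C²)·t)·(F(u) − F(u*)). -/
theorem backtracking_contraction_inequality
    {H : Type*} [NormedAddCommGroup H] [InnerProductSpace ℝ H] [CompleteSpace H]
    (b : H →ₗ[ℝ] H →ₗ[ℝ] ℝ)
    (hsymm : ∀ u v : H, b u v = b v u)
    (hnonneg : ∀ u : H, 0 ≤ b u u)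
    (C : ℝ) (hC : 0 < C)
    (hnorm : ∀ u : H, ‖u‖ ≤ C * Real.sqrt (b u u))
    (hnorm' : ∀ u : H, Real.sqrt (b u u) ≤ C * ‖u‖)
    (F : H → ℝ) (hF : Differentiable ℝ F)
    (m M : ℝ) (hm : 0 < m) (hM : 0 < M)
    (hlow : ∀ u v : H, m / 2 * ‖v - u‖^2 ≤ F v - F u - fderiv ℝ F u (v - u))
    (hup : ∀ u v : H, F v - F u - fderiv ℝ F u (v - u) ≤ M / 2 * ‖v - u‖^2)
    (G : H → H) (hG : ∀ u φ : H, fderiv ℝ F u φ = b (G u) φ)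
    (ustar : H) (hmin : ∀ v : H, F ustar ≤ F v) :
    ∀ α ∈ Set.Ioo (0 : ℝ) (1/2), ∀ u : H, ∀ t : ℝ, 0 < t →
      F (u - t • G u) ≤ F u - α * t * b (G u) (G u) →
      F (u - t • G u) - F ustar ≤ (1 - (2 * α * m / C^2) * t) * (F u - F ustar) := by
  intro α hα u t ht hexit
  obtain ⟨hα0, hα2⟩ := hα
  set g := b (G u) (G u) with hg
  set w := ustar - u with hw
  set s := ‖w‖ with hs
  -- strong convexity at u evaluated at ustar
  have h1 : m / 2 * s^2 ≤ F ustar - F u - b (G u) w := by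
    have := hlow u ustar
    rwa [hG u (ustar - u)] at this
  have hgnn : 0 ≤ g := hnonneg (G u)
  have hsnn : (0:ℝ) ≤ s := norm_nonneg w
  -- Cauchy-Schwarz + norm comparability
  have hcs : (b (G u) w)^2 ≤ g * (C^2 * s^2) := by
    have h2 := cs_aux b hsymm hnonneg (G u) w
    have h3 : b w w ≤ C^2 * s^2 := by
      have h4 := hnorm' w
      have h5 : b w w = (Real.sqrt (b w w))^2 := (Real.sq_sqrt (hnonneg w)).symm
      nlinarith [Real.sqrt_nonneg (b w w), mul_nonneg hC.le hsnn]
    nlinarith [sq_nonneg (b (G u) w)]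
  -- |2m·b(Gu,w)| bound
  have habs : (2*m*(b (G u) w))^2 ≤ (C^2*g + m^2*s^2)^2 := by
    nlinarith [mul_le_mul_of_nonneg_left hcs (by positivity : (0:ℝ) ≤ 4*m^2),
      sq_nonneg (C^2*g - m^2*s^2)]
  have hRnn : (0:ℝ) ≤ C^2*g + m^2*s^2 := by positivity
  have hbd : -(2*m*(b (G u) w)) ≤ C^2*g + m^2*s^2 := by
    nlinarith [habs, hRnn]
  -- PL-type inequality: F u - F ustar ≤ C^2 g / (2m)
  have h2m : (0:ℝ) < 2 * m := by linarith
  have hPL : 2 * m * (F u - F ustar) ≤ C^2 * g := by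
    nlinarith [h1, hbd, hm]
  -- combine with exit condition
  have hC2 : (0:ℝ) < C^2 := by positivity
  have hat : 0 < α * t := mul_pos hα0 ht
  have hstep : (2 * α * m / C^2) * t * (F u - F ustar) ≤ α * t * g := by
    rw [div_mul_eq_mul_div, div_mul_eq_mul_div, div_le_iff₀ hC2]
    nlinarith [mul_le_mul_of_nonneg_left hPL hat.le]
  have hmain : F (u - t • G u) - F ustar ≤ (F u - F ustar) - α * t * g := by
    linarith
  calc F (u - t • G u) - F ustar ≤ (F u - F ustar) - α * t * g := hmain
  _ ≤ (F u - F ustar) - (2 * α * m / C^2) * t * (F u - F ustar) := by linarith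
  _ = (1 - (2 * α * m / C^2) * t) * (F u - F ustar) := by ring
end

section
/- For every saturated state S₁ ∈ 𝒮 and every unsaturated state S₂ ∈ 𝒰 there exists a unique minimizer over the interface: there is exactly one I* ∈ 𝓘 such that N_s(S₁ − I*) + N_u(S₂ − I*) ≤ N_s(S₁ − I) + N_u(S₂ − I) for every I ∈ 𝓘. -/
/-- The saturated norm N_s on states (u₁,u₂,u₃,θ,q) ∈ ℝ⁵. -/
noncomputable def satNorm (S : Fin 5 → ℝ) : ℝ :=
  Real.sqrt ((S 0)^2 + (S 1)^2 + (S 2)^2 + (S 3)^2 + (S 3 + S 4)^2)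

/-- The unsaturated norm N_u on states (u₁,u₂,u₃,θ,q) ∈ ℝ⁵. -/
noncomputable def unsatNorm (S : Fin 5 → ℝ) : ℝ :=
  Real.sqrt ((S 0)^2 + (S 1)^2 + (S 2)^2 + (S 3)^2 + (S 4)^2 + (S 3 + S 4)^2)

@[simp] lemma vec6_five {α : Type*} (a b c d e f : α) : ![a,b,c,d,e,f] 5 = f := rfl

noncomputable def satEmb (S : Fin 5 → ℝ) : EuclideanSpace ℝ (Fin 5) :=
  (WithLp.equiv 2 (Fin 5 → ℝ)).symm ![S 0, S 1, S 2, S 3, S 3 + S 4]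

noncomputable def unsatEmb (S : Fin 5 → ℝ) : EuclideanSpace ℝ (Fin 6) :=
  (WithLp.equiv 2 (Fin 6 → ℝ)).symm ![S 0, S 1, S 2, S 3, S 4, S 3 + S 4]

lemma satEmb_sub (S T : Fin 5 → ℝ) : satEmb (S - T) = satEmb S - satEmb T := by
  ext i; fin_cases i <;> simp [satEmb] <;> try ring

lemma unsatEmb_sub (S T : Fin 5 → ℝ) : unsatEmb (S - T) = unsatEmb S - unsatEmb T := by
  ext i; fin_cases i <;> simp [unsatEmb] <;> try ring

lemma satNorm_eq (S : Fin 5 → ℝ) : satNorm S = ‖satEmb S‖ := by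
  rw [EuclideanSpace.norm_eq]
  simp [satEmb, Fin.sum_univ_five, satNorm, Real.norm_eq_abs, sq_abs]

lemma unsatNorm_eq (S : Fin 5 → ℝ) : unsatNorm S = ‖unsatEmb S‖ := by
  rw [EuclideanSpace.norm_eq]
  simp [unsatEmb, Fin.sum_univ_six, unsatNorm, Real.norm_eq_abs, sq_abs]

lemma satEmb_mid (S I I' : Fin 5 → ℝ) :
    satEmb S - satEmb ((2⁻¹ : ℝ) • (I + I')) =
      (2⁻¹ : ℝ) • ((satEmb S - satEmb I) + (satEmb S - satEmb I')) := by
  ext i; fin_cases i <;> simp [satEmb] <;> try ring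

lemma unsatEmb_mid (S I I' : Fin 5 → ℝ) :
    unsatEmb S - unsatEmb ((2⁻¹ : ℝ) • (I + I')) =
      (2⁻¹ : ℝ) • ((unsatEmb S - unsatEmb I) + (unsatEmb S - unsatEmb I')) := by
  ext i; fin_cases i <;> simp [unsatEmb] <;> try ring

lemma norm_le_satNorm (J : Fin 5 → ℝ) (hJ : J 4 = 0) : ‖J‖ ≤ satNorm J := by
  rw [satNorm, pi_norm_le_iff_of_nonneg (Real.sqrt_nonneg _)]
  intro i
  simp only [Real.norm_eq_abs]
  have habs : ∀ x y z w v : ℝ, x^2 ≤ x^2 + y^2 + z^2 + w^2 + v^2 →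
      |x| ≤ Real.sqrt (x^2 + y^2 + z^2 + w^2 + v^2) := by
    intro x y z w v h
    rw [← Real.sqrt_sq_eq_abs]
    exact Real.sqrt_le_sqrt h
  fin_cases i
  · exact habs _ _ _ _ _ (by nlinarith [sq_nonneg (J 1), sq_nonneg (J 2), sq_nonneg (J 3), sq_nonneg (J 3 + J 4)])
  · rw [show (J 0)^2 + (J 1)^2 + (J 2)^2 + (J 3)^2 + (J 3 + J 4)^2
        = (J 1)^2 + (J 0)^2 + (J 2)^2 + (J 3)^2 + (J 3 + J 4)^2 by ring]
    exact habs _ _ _ _ _ (by nlinarith [sq_nonneg (J 0), sq_nonneg (J 2), sq_nonneg (J 3), sq_nonneg (J 3 + J 4)])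
  · rw [show (J 0)^2 + (J 1)^2 + (J 2)^2 + (J 3)^2 + (J 3 + J 4)^2
        = (J 2)^2 + (J 0)^2 + (J 1)^2 + (J 3)^2 + (J 3 + J 4)^2 by ring]
    exact habs _ _ _ _ _ (by nlinarith [sq_nonneg (J 0), sq_nonneg (J 1), sq_nonneg (J 3), sq_nonneg (J 3 + J 4)])
  · rw [show (J 0)^2 + (J 1)^2 + (J 2)^2 + (J 3)^2 + (J 3 + J 4)^2
        = (J 3)^2 + (J 0)^2 + (J 1)^2 + (J 2)^2 + (J 3 + J 4)^2 by ring]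
    exact habs _ _ _ _ _ (by nlinarith [sq_nonneg (J 0), sq_nonneg (J 1), sq_nonneg (J 2), sq_nonneg (J 3 + J 4)])
  · show |J 4| ≤ Real.sqrt ((J 0)^2 + (J 1)^2 + (J 2)^2 + (J 3)^2 + (J 3 + J 4)^2)
    rw [hJ, abs_zero]
    exact Real.sqrt_nonneg _

/-- for every saturated state S₁ (q ≥ 0) and unsaturated state S₂ (q < 0)
there is exactly one interface point I* (with q-component 0) minimizing
N_s(S₁ − I) + N_u(S₂ − I) over the interface. -/
theorem unique_interface_minimizer (S₁ S₂ : Fin 5 → ℝ)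
    (h₁ : 0 ≤ S₁ 4) (h₂ : S₂ 4 < 0) :
    ∃! I : Fin 5 → ℝ, I 4 = 0 ∧
      ∀ J : Fin 5 → ℝ, J 4 = 0 →
        satNorm (S₁ - I) + unsatNorm (S₂ - I) ≤ satNorm (S₁ - J) + unsatNorm (S₂ - J) := by
  set f : (Fin 5 → ℝ) → ℝ := fun J => satNorm (S₁ - J) + unsatNorm (S₂ - J) with hf_def
  have hcont : Continuous f := by
    apply Continuous.add
    · apply Real.continuous_sqrt.comp
      simp only [Pi.sub_apply]
      fun_prop
    · apply Real.continuous_sqrt.comp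
      simp only [Pi.sub_apply]
      fun_prop
  have hΓ : IsClosed {J : Fin 5 → ℝ | J 4 = 0} :=
    isClosed_eq (continuous_apply 4) continuous_const
  have h0Γ : (0 : Fin 5 → ℝ) ∈ {J : Fin 5 → ℝ | J 4 = 0} := by simp
  have hlow : ∀ J : Fin 5 → ℝ, J 4 = 0 → ‖J‖ - satNorm S₁ ≤ f J := by
    intro J hJ
    have h1 : satNorm J - satNorm S₁ ≤ satNorm (S₁ - J) := by
      rw [satNorm_eq, satNorm_eq, satNorm_eq, satEmb_sub]
      have := norm_sub_norm_le (satEmb J) (satEmb S₁)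
      rw [← norm_neg (satEmb J - satEmb S₁), neg_sub] at this
      linarith
    have h2 : 0 ≤ unsatNorm (S₂ - J) := Real.sqrt_nonneg _
    have h3 := norm_le_satNorm J hJ
    simp only [hf_def]
    linarith
  have hcoer : ∀ᶠ J in Filter.cocompact (Fin 5 → ℝ) ⊓ Filter.principal
      {J : Fin 5 → ℝ | J 4 = 0}, f 0 ≤ f J := by
    rw [Filter.eventually_inf_principal]
    have : ∀ᶠ J in Filter.cocompact (Fin 5 → ℝ), f 0 + satNorm S₁ ≤ ‖J‖ :=
      tendsto_norm_cocompact_atTop.eventually_ge_atTop _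
    filter_upwards [this] with J hJn hJΓ
    have := hlow J hJΓ
    linarith
  obtain ⟨I, hIΓ, hImin⟩ := (hcont.continuousOn).exists_isMinOn' hΓ h0Γ hcoer
  have hI4 : I 4 = 0 := hIΓ
  refine ⟨I, ⟨hI4, fun J hJ => hImin hJ⟩, ?_⟩
  rintro I' ⟨hI'Γ, hI'min⟩
  have hminI : f I ≤ f I' := hImin (show I' ∈ {J : Fin 5 → ℝ | J 4 = 0} from hI'Γ)
  have hII' : f I' = f I := le_antisymm (hI'min I hI4) hminI
  set K : Fin 5 → ℝ := (2⁻¹ : ℝ) • (I' + I) with hK_def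
  have hKΓ : K ∈ {J : Fin 5 → ℝ | J 4 = 0} := by
    simp [hK_def, hI4, hI'Γ]
  set u : EuclideanSpace ℝ (Fin 6) := unsatEmb S₂ - unsatEmb I' with hu_def
  set v : EuclideanSpace ℝ (Fin 6) := unsatEmb S₂ - unsatEmb I with hv_def
  have hu4 : u 4 = S₂ 4 := by
    rw [hu_def, ← unsatEmb_sub]
    simp [unsatEmb, hI'Γ]
  have hv4 : v 4 = S₂ 4 := by
    rw [hv_def, ← unsatEmb_sub]
    simp [unsatEmb, hI4]
  have hS24 : S₂ 4 ≠ 0 := ne_of_lt h₂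
  have hu0 : u ≠ 0 := by
    intro h
    apply hS24
    rw [← hu4, h]
    rfl
  have hv0 : v ≠ 0 := by
    intro h
    apply hS24
    rw [← hv4, h]
    rfl
  have hray : SameRay ℝ u v := by
    by_contra hns
    have hlt : ‖u + v‖ < ‖u‖ + ‖v‖ := norm_add_lt_of_not_sameRay hns
    have e1 : satNorm (S₁ - K) = 2⁻¹ * ‖(satEmb S₁ - satEmb I') + (satEmb S₁ - satEmb I)‖ := by
      rw [satNorm_eq, satEmb_sub, hK_def, satEmb_mid, norm_smul]
      norm_num
    have e2 : unsatNorm (S₂ - K) = 2⁻¹ * ‖u + v‖ := by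
      rw [unsatNorm_eq, unsatEmb_sub, hK_def, unsatEmb_mid, norm_smul, hu_def, hv_def]
      norm_num
    have t1 : ‖(satEmb S₁ - satEmb I') + (satEmb S₁ - satEmb I)‖
        ≤ ‖satEmb S₁ - satEmb I'‖ + ‖satEmb S₁ - satEmb I‖ := norm_add_le _ _
    have eI' : f I' = ‖satEmb S₁ - satEmb I'‖ + ‖u‖ := by
      simp only [hf_def, hu_def]
      rw [satNorm_eq, unsatNorm_eq, satEmb_sub, unsatEmb_sub]
    have eI : f I = ‖satEmb S₁ - satEmb I‖ + ‖v‖ := by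
      simp only [hf_def, hv_def]
      rw [satNorm_eq, unsatNorm_eq, satEmb_sub, unsatEmb_sub]
    have hfK : f K < 2⁻¹ * (f I' + f I) := by
      have : f K = satNorm (S₁ - K) + unsatNorm (S₂ - K) := rfl
      rw [this, e1, e2, eI', eI]
      linarith
    have hle : f I ≤ f K := hImin hKΓ
    rw [hII'] at hfK
    have hhalf : (2:ℝ)⁻¹ * (f I + f I) = f I := by ring
    rw [hhalf] at hfK
    exact absurd hfK (not_lt.2 hle)
  obtain ⟨r, s, hr, hs, hrs⟩ := hray.exists_pos hu0 hv0
  have hrs4 : r * S₂ 4 = s * S₂ 4 := by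
    have h4 : (r • u) 4 = (s • v) 4 := by rw [hrs]
    have hru : (r • u) 4 = r * u 4 := rfl
    have hsv : (s • v) 4 = s * v 4 := rfl
    rw [hru, hsv, hu4, hv4] at h4
    exact h4
  have hr_eq_s : r = s := mul_right_cancel₀ hS24 hrs4
  have huv : u = v := by
    rw [hr_eq_s] at hrs
    exact smul_right_injective _ (ne_of_gt hs) hrs
  have hemb : unsatEmb I' = unsatEmb I := by
    rw [hu_def, hv_def] at huv
    exact sub_right_injective huv
  funext i
  fin_cases i
  · have := congrFun (congrArg (WithLp.equiv 2 (Fin 6 → ℝ)) hemb) 0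
    simpa [unsatEmb] using this
  · have := congrFun (congrArg (WithLp.equiv 2 (Fin 6 → ℝ)) hemb) 1
    simpa [unsatEmb] using this
  · have := congrFun (congrArg (WithLp.equiv 2 (Fin 6 → ℝ)) hemb) 2
    simpa [unsatEmb] using this
  · have := congrFun (congrArg (WithLp.equiv 2 (Fin 6 → ℝ)) hemb) 3
    simpa [unsatEmb] using this
  · show I' 4 = I 4
    rw [hI'Γ, hI4]
end

section
/- The Snell-type distance does not agree with the extraction of a balanced component: for S = (0,0,0,−3,1), its balanced component S_B = (0,0,0,−1,−1), and the balanced state T* = (0,0,0,−11/10,−11/10) ∈ B, one has the strict inequality d_Snell(S, T*) < d_Snell(S, S_B); in particular S_B is not the d_Snell-closest point of the balanced set B to S. -/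
/-- The Snell-type distance on ℝ⁵. -/
noncomputable def dSnell (S₁ S₂ : Fin 5 → ℝ) : ℝ :=
  if S₁ 4 < 0 then
    (if S₂ 4 < 0 then unsatNorm (S₁ - S₂)
     else sInf {r : ℝ | ∃ I : Fin 5 → ℝ, I 4 = 0 ∧ r = satNorm (S₂ - I) + unsatNorm (S₁ - I)})
  else
    (if S₂ 4 < 0 then
      sInf {r : ℝ | ∃ I : Fin 5 → ℝ, I 4 = 0 ∧ r = satNorm (S₁ - I) + unsatNorm (S₂ - I)}
     else satNorm (S₁ - S₂))

/-- The pointwise balanced set: vanishing velocity and vanishing buoyancy θ − min(q,0). -/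
def balancedSet : Set (Fin 5 → ℝ) :=
  {S | S 0 = 0 ∧ S 1 = 0 ∧ S 2 = 0 ∧ S 3 - min (S 4) 0 = 0}

/-- Key pointwise lower bound: any Snell path from S = (0,0,0,−3,1) through the
interface to S_B = (0,0,0,−1,−1) has length at least 2.39. -/
lemma core_lower (t : ℝ) :
    (239/100 : ℝ) ≤ Real.sqrt ((t+3)^2 + (t+2)^2) + Real.sqrt ((t+1)^2 + 1 + (t+2)^2) := by
  have hA : (0:ℝ) ≤ (t+3)^2 + (t+2)^2 := by positivity
  set a := Real.sqrt ((t+3)^2 + (t+2)^2) with ha_def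
  have ha : a^2 = (t+3)^2 + (t+2)^2 := Real.sq_sqrt hA
  have ha0 : 0 ≤ a := Real.sqrt_nonneg _
  have h1 : (239/100:ℝ)^2 + 4*t + 7 ≤ 2*(239/100)*a := by
    nlinarith [sq_nonneg (t + 427/200),
      sq_nonneg (2*(239/100)*a - ((239/100:ℝ)^2 + 4*t + 7)),
      sq_nonneg (2*(239/100)*a + ((239/100:ℝ)^2 + 4*t + 7))]
  have h2 : ((239/100:ℝ) - a)^2 ≤ (t+1)^2 + 1 + (t+2)^2 := by nlinarith
  have h3 : (239/100:ℝ) - a ≤ Real.sqrt ((t+1)^2 + 1 + (t+2)^2) := by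
    calc (239/100:ℝ) - a ≤ |239/100 - a| := le_abs_self _
    _ = Real.sqrt ((239/100 - a)^2) := (Real.sqrt_sq_eq_abs _).symm
    _ ≤ _ := Real.sqrt_le_sqrt h2
  linarith

/-- The main strict inequality between the two Snell distances. -/
lemma dSnell_main_lt :
    dSnell ![0, 0, 0, (-3 : ℝ), 1] ![0, 0, 0, -(11/10 : ℝ), -(11/10 : ℝ)]
      < dSnell ![0, 0, 0, (-3 : ℝ), 1] ![0, 0, 0, (-1 : ℝ), (-1 : ℝ)] := by
  have hred : ∀ θq : ℝ, θq < 0 →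
      dSnell ![0, 0, 0, (-3 : ℝ), 1] ![0, 0, 0, θq, θq]
      = sInf {r : ℝ | ∃ I : Fin 5 → ℝ, I 4 = 0 ∧
          r = satNorm (![0, 0, 0, (-3 : ℝ), 1] - I) + unsatNorm (![0, 0, 0, θq, θq] - I)} := by
    intro θq h
    rw [dSnell, if_neg (show ¬ (![0, 0, 0, (-3 : ℝ), 1] 4 < 0) from by show ¬ ((1:ℝ) < 0); norm_num), if_pos (by exact h)]
  have hsat : ∀ I : Fin 5 → ℝ, I 4 = 0 →
      satNorm (![0, 0, 0, (-3 : ℝ), 1] - I)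
        = Real.sqrt (((I 0)^2 + (I 1)^2 + (I 2)^2) + ((I 3 + 3)^2 + (I 3 + 2)^2)) := by
    intro I hI
    simp only [satNorm, Pi.sub_apply, Matrix.cons_val_zero, Matrix.cons_val_one, Matrix.head_cons,
      Matrix.cons_val_two, Matrix.tail_cons, Matrix.cons_val_three, Matrix.cons_val_four, hI]
    congr 1; ring
  have hunsat : ∀ (θq : ℝ) (I : Fin 5 → ℝ), I 4 = 0 →
      unsatNorm (![0, 0, 0, θq, θq] - I)
        = Real.sqrt (((I 0)^2 + (I 1)^2 + (I 2)^2)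
            + ((I 3 - θq)^2 + θq^2 + (I 3 - 2*θq)^2)) := by
    intro θq I hI
    simp only [unsatNorm, Pi.sub_apply, Matrix.cons_val_zero, Matrix.cons_val_one, Matrix.head_cons,
      Matrix.cons_val_two, Matrix.tail_cons, Matrix.cons_val_three, Matrix.cons_val_four, hI]
    congr 1; ring
  rw [hred (-(11/10)) (by norm_num), hred (-1) (by norm_num)]
  -- Upper bound for the distance to T*, via the interface point I* = (0,0,0,-11/5,0)
  have hub : sInf {r : ℝ | ∃ I : Fin 5 → ℝ, I 4 = 0 ∧
      r = satNorm (![0, 0, 0, (-3 : ℝ), 1] - I)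
        + unsatNorm (![0, 0, 0, -(11/10:ℝ), -(11/10:ℝ)] - I)}
      ≤ Real.sqrt (17/25) + Real.sqrt (121/50) := by
    apply csInf_le
    · refine ⟨0, ?_⟩
      rintro r ⟨I, hI, rfl⟩
      simp only [satNorm, unsatNorm]
      positivity
    · refine ⟨![0, 0, 0, -(11/5 : ℝ), 0], rfl, ?_⟩
      rw [hsat _ rfl, hunsat _ _ rfl]
      simp only [Matrix.cons_val_zero, Matrix.cons_val_one, Matrix.head_cons,
        Matrix.cons_val_two, Matrix.tail_cons, Matrix.cons_val_three]
      norm_num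
  -- Lower bound for the distance to S_B
  have hlb : (239/100 : ℝ) ≤ sInf {r : ℝ | ∃ I : Fin 5 → ℝ, I 4 = 0 ∧
      r = satNorm (![0, 0, 0, (-3 : ℝ), 1] - I)
        + unsatNorm (![0, 0, 0, (-1:ℝ), (-1:ℝ)] - I)} := by
    apply le_csInf
    · exact ⟨_, (fun _ => 0), rfl, rfl⟩
    · rintro r ⟨I, hI, rfl⟩
      have h1 : Real.sqrt ((I 3 + 3)^2 + (I 3 + 2)^2)
          ≤ satNorm (![0, 0, 0, (-3 : ℝ), 1] - I) := by
        rw [hsat _ hI]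
        apply Real.sqrt_le_sqrt
        nlinarith [sq_nonneg (I 0), sq_nonneg (I 1), sq_nonneg (I 2)]
      have h2 : Real.sqrt ((I 3 + 1)^2 + 1 + (I 3 + 2)^2)
          ≤ unsatNorm (![0, 0, 0, (-1:ℝ), (-1:ℝ)] - I) := by
        rw [hunsat _ _ hI]
        apply Real.sqrt_le_sqrt
        nlinarith [sq_nonneg (I 0), sq_nonneg (I 1), sq_nonneg (I 2)]
      have := core_lower (I 3)
      linarith
  -- Numerics: √(17/25) + √(121/50) < 239/100
  have n1 : Real.sqrt (17/25) < 33/40 := by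
    rw [show (33/40:ℝ) = Real.sqrt ((33/40)^2) from (Real.sqrt_sq (by norm_num)).symm]
    exact Real.sqrt_lt_sqrt (by norm_num) (by norm_num)
  have n2 : Real.sqrt (121/50) < 389/250 := by
    rw [show (389/250:ℝ) = Real.sqrt ((389/250)^2) from (Real.sqrt_sq (by norm_num)).symm]
    exact Real.sqrt_lt_sqrt (by norm_num) (by norm_num)
  linarith

/-- the Snell-type distance does not agree with the extraction of a
balanced component: for S = (0,0,0,−3,1) with balanced component S_B = (0,0,0,−1,−1)
and the balanced state T* = (0,0,0,−11/10,−11/10), one has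
d_Snell(S,T*) < d_Snell(S,S_B); in particular S_B is not the d_Snell-closest point
of the balanced set to S. -/
theorem dSnell_does_not_agree_with_balanced_projection :
    (![0, 0, 0, -(11/10 : ℝ), -(11/10 : ℝ)]) ∈ balancedSet ∧
    dSnell ![0, 0, 0, (-3 : ℝ), 1] ![0, 0, 0, -(11/10 : ℝ), -(11/10 : ℝ)]
      < dSnell ![0, 0, 0, (-3 : ℝ), 1] ![0, 0, 0, (-1 : ℝ), (-1 : ℝ)] ∧
    ¬ (∀ T ∈ balancedSet,
        dSnell ![0, 0, 0, (-3 : ℝ), 1] ![0, 0, 0, (-1 : ℝ), (-1 : ℝ)]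
          ≤ dSnell ![0, 0, 0, (-3 : ℝ), 1] T) := by
  have hmem : (![0, 0, 0, -(11/10 : ℝ), -(11/10 : ℝ)]) ∈ balancedSet := by
    refine ⟨rfl, rfl, rfl, ?_⟩
    show -(11/10 : ℝ) - min (-(11/10 : ℝ)) 0 = 0
    norm_num
  exact ⟨hmem, dSnell_main_lt, fun h => absurd (h _ hmem) (not_le.mpr dSnell_main_lt)⟩
end

section
/- The infimum over θ ∈ ℝ of the function f(θ) := ((θ+3)² + (θ+2)²)^{1/2} + ((θ+1)² + 1 + (θ+2)²)^{1/2} equals (1 + √3)·(5/2 − √3)^{1/2}, and it is attained at the unique minimizer θ* = −3 + (√3)/2. (Equivalently, d_Snell(S, S_B) = (1+√3)·√(5/2 − √3) for S = (0,0,0,−3,1) and S_B = (0,0,0,−1,−1), since f(θ) = N_s(S − I(θ)) + N_u(S_B − I(θ)) with I(θ) = (0,0,0,θ,0).) -/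
lemma le_sqrt_of_sq_le' {L X : ℝ} (h : L^2 ≤ X) : L ≤ Real.sqrt X :=
  le_trans (le_abs_self L)
    (by rw [← Real.sqrt_sq_eq_abs]; exact Real.sqrt_le_sqrt h)

/-- the infimum over θ ∈ ℝ of
f(θ) = √((θ+3)² + (θ+2)²) + √((θ+1)² + 1 + (θ+2)²)
equals (1 + √3)·√(5/2 − √3), and it is attained at the unique minimizer
θ* = −3 + √3/2. -/
theorem snell_intersection_exact_value :
    IsLeast (Set.range (fun θ : ℝ =>
        Real.sqrt ((θ + 3)^2 + (θ + 2)^2) + Real.sqrt ((θ + 1)^2 + 1 + (θ + 2)^2)))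
      ((1 + Real.sqrt 3) * Real.sqrt (5/2 - Real.sqrt 3)) ∧
    (Real.sqrt (((-3 + Real.sqrt 3 / 2) + 3)^2 + ((-3 + Real.sqrt 3 / 2) + 2)^2)
        + Real.sqrt (((-3 + Real.sqrt 3 / 2) + 1)^2 + 1 + ((-3 + Real.sqrt 3 / 2) + 2)^2)
      = (1 + Real.sqrt 3) * Real.sqrt (5/2 - Real.sqrt 3)) ∧
    (∀ θ : ℝ,
      Real.sqrt ((θ + 3)^2 + (θ + 2)^2) + Real.sqrt ((θ + 1)^2 + 1 + (θ + 2)^2)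
        = (1 + Real.sqrt 3) * Real.sqrt (5/2 - Real.sqrt 3) →
      θ = -3 + Real.sqrt 3 / 2) := by
  set s := Real.sqrt 3 with hs
  have hs2 : s ^ 2 = 3 := Real.sq_sqrt (by norm_num)
  have hs0 : 0 < s := Real.sqrt_pos.mpr (by norm_num)
  have hslt : s < 5/2 := by nlinarith
  have hd : (0:ℝ) < 5/2 - s := by linarith
  set r := Real.sqrt (5/2 - s) with hreq
  have hr2 : r ^ 2 = 5/2 - s := Real.sq_sqrt hd.le
  have hr0 : 0 < r := Real.sqrt_pos.mpr hd
  clear_value s r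
  -- value at θ*
  have hval : Real.sqrt (((-3 + s / 2) + 3)^2 + ((-3 + s / 2) + 2)^2)
        + Real.sqrt (((-3 + s / 2) + 1)^2 + 1 + ((-3 + s / 2) + 2)^2)
      = (1 + s) * r := by
    have e1 : ((-3 + s / 2) + 3)^2 + ((-3 + s / 2) + 2)^2 = r ^ 2 := by
      rw [hr2]; linear_combination hs2 / 2
    have e2 : ((-3 + s / 2) + 1)^2 + 1 + ((-3 + s / 2) + 2)^2 = (s * r) ^ 2 := by
      have h : (s*r)^2 = 3 * (5/2 - s) := by rw [mul_pow, hs2, hr2]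
      rw [h]; linear_combination hs2 / 2
    rw [e1, e2, Real.sqrt_sq hr0.le, Real.sqrt_sq (mul_nonneg hs0.le hr0.le)]
    ring
  -- Cauchy–Schwarz lower bounds
  have h1 : ∀ θ : ℝ, (s/2)*(θ+3) + (s/2-1)*(θ+2)
      ≤ r * Real.sqrt ((θ+3)^2+(θ+2)^2) := by
    intro θ
    have hsq : ((s/2)*(θ+3) + (s/2-1)*(θ+2))^2 + (θ+3-s/2)^2
        = (5/2-s) * ((θ+3)^2+(θ+2)^2) := by
      linear_combination (((θ+3)^2+(θ+2)^2)/2) * hs2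
    have := le_sqrt_of_sq_le'
      (X := (5/2-s) * ((θ+3)^2+(θ+2)^2)) (L := (s/2)*(θ+3) + (s/2-1)*(θ+2))
      (by nlinarith [sq_nonneg (θ+3-s/2)])
    rwa [Real.sqrt_mul hd.le, ← hreq] at this
  have h2 : ∀ θ : ℝ, (s/2-2)*(θ+1) + 1 + (s/2-1)*(θ+2)
      ≤ (s*r) * Real.sqrt ((θ+1)^2+1+(θ+2)^2) := by
    intro θ
    have hsq : ((s/2-2)*(θ+1) + 1 + (s/2-1)*(θ+2))^2 + 3*(θ+3-s/2)^2
        = (15/2-3*s) * ((θ+1)^2+1+(θ+2)^2) := by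
      linear_combination (((θ+1)^2+1+(θ+2)^2)/2) * hs2
    have hsr : s * r = Real.sqrt (15/2 - 3*s) := by
      rw [show (15/2 - 3*s : ℝ) = 3 * (5/2 - s) by ring,
        Real.sqrt_mul (by norm_num : (0:ℝ) ≤ 3), ← hs, ← hreq]
    have := le_sqrt_of_sq_le'
      (X := (15/2-3*s) * ((θ+1)^2+1+(θ+2)^2))
      (L := (s/2-2)*(θ+1) + 1 + (s/2-1)*(θ+2))
      (by nlinarith [sq_nonneg (θ+3-s/2)])
    rwa [Real.sqrt_mul (by linarith : (0:ℝ) ≤ 15/2-3*s), ← hsr] at this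
  -- key linear identity
  have ident : ∀ θ : ℝ, s*((s/2)*(θ+3) + (s/2-1)*(θ+2))
      + ((s/2-2)*(θ+1) + 1 + (s/2-1)*(θ+2)) = s*r*((1+s)*r) := by
    intro θ
    have : s*r*((1+s)*r) = s*(1+s)*(5/2-s) := by
      have : s*r*((1+s)*r) = s*(1+s)*r^2 := by ring
      rw [this, hr2]
    rw [this]
    linear_combination (θ + s + 1) * hs2
  have hsr0 : 0 < s * r := mul_pos hs0 hr0
  refine ⟨⟨⟨-3 + s/2, hval⟩, ?_⟩, hval, ?_⟩
  · rintro x ⟨θ, rfl⟩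
    have hb1 := h1 θ
    have hb2 := h2 θ
    have hid := ident θ
    have hb1' := mul_le_mul_of_nonneg_left hb1 hs0.le
    dsimp only
    nlinarith [hsr0]
  · intro θ heq
    have hb1 := h1 θ
    have hb2 := h2 θ
    have hid := ident θ
    -- equality forces the first CS inequality to be equality
    have hA : (0:ℝ) ≤ (θ+3)^2+(θ+2)^2 := by positivity
    have hsA : Real.sqrt ((θ+3)^2+(θ+2)^2) ^ 2 = (θ+3)^2+(θ+2)^2 :=
      Real.sq_sqrt hA
    have hmul : s*r*(Real.sqrt ((θ+3)^2+(θ+2)^2)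
        + Real.sqrt ((θ+1)^2+1+(θ+2)^2)) = s*r*((1+s)*r) := by rw [heq]
    have hid := ident θ
    have key1 : s * (r * Real.sqrt ((θ+3)^2+(θ+2)^2)
          - ((s/2)*(θ+3) + (s/2-1)*(θ+2)))
        = -((s*r) * Real.sqrt ((θ+1)^2+1+(θ+2)^2)
          - ((s/2-2)*(θ+1) + 1 + (s/2-1)*(θ+2))) := by
      linear_combination hmul - hid
    have hn1 : 0 ≤ s * (r * Real.sqrt ((θ+3)^2+(θ+2)^2)
          - ((s/2)*(θ+3) + (s/2-1)*(θ+2))) :=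
      mul_nonneg hs0.le (by linarith)
    have hn2 : 0 ≤ (s*r) * Real.sqrt ((θ+1)^2+1+(θ+2)^2)
          - ((s/2-2)*(θ+1) + 1 + (s/2-1)*(θ+2)) := by linarith
    have hzero : s * (r * Real.sqrt ((θ+3)^2+(θ+2)^2)
          - ((s/2)*(θ+3) + (s/2-1)*(θ+2))) = 0 :=
      le_antisymm (by linarith) hn1
    have he1 : r * Real.sqrt ((θ+3)^2+(θ+2)^2)
        = (s/2)*(θ+3) + (s/2-1)*(θ+2) := by
      rcases mul_eq_zero.mp hzero with h | h
      · exact absurd h hs0.ne'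
      · linarith
    have hsq : ((s/2)*(θ+3) + (s/2-1)*(θ+2))^2 + (θ+3-s/2)^2
        = (5/2-s) * ((θ+3)^2+(θ+2)^2) := by
      linear_combination (((θ+3)^2+(θ+2)^2)/2) * hs2
    have h' : ((s/2)*(θ+3) + (s/2-1)*(θ+2))^2
        = (5/2-s) * ((θ+3)^2+(θ+2)^2) := by
      rw [← he1, mul_pow, hsA, hr2]
    have hz : (θ+3-s/2)^2 = 0 := by linear_combination hsq - h'
    have : θ + 3 - s/2 = 0 := (pow_eq_zero_iff two_ne_zero).mp hz
    linarith
end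

section
/- The ordinary differential equation q'' + q + min(q, 0) = 0 admits periodic solutions with nonzero average over their period: there exist T > 0 and a function q : ℝ → ℝ such that q is periodic with period T, q is twice differentiable on ℝ with (deriv (deriv q))(t) + q(t) + min(q(t), 0) = 0 for every t ∈ ℝ, and ∫_{0}^{T} q(t) dt ≠ 0. -/
open Real Set

namespace Ode13

/-- A piecewise glued function is differentiable if pieces agree in value and derivative. -/
lemma piecewise_hasDerivAt {a : ℝ} {f₁ f₂ f₁' f₂' : ℝ → ℝ}
    (h1 : ∀ t, HasDerivAt f₁ (f₁' t) t) (h2 : ∀ t, HasDerivAt f₂ (f₂' t) t)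
    (hval : f₁ a = f₂ a) (hder : f₁' a = f₂' a) (t : ℝ) :
    HasDerivAt (fun x => if x ≤ a then f₁ x else f₂ x)
      (if t ≤ a then f₁' t else f₂' t) t := by
  rcases lt_trichotomy t a with h | h | h
  · rw [if_pos h.le]
    apply (h1 t).congr_of_eventuallyEq
    filter_upwards [Iio_mem_nhds h] with x hx
    rw [if_pos hx.le]
  · subst h
    rw [if_pos le_rfl]
    have hl : HasDerivWithinAt (fun x => if x ≤ t then f₁ x else f₂ x) (f₁' t) (Iic t) t :=
      (h1 t).hasDerivWithinAt.congr (fun x hx => if_pos hx) (if_pos le_rfl)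
    have hr : HasDerivWithinAt (fun x => if x ≤ t then f₁ x else f₂ x) (f₁' t) (Ici t) t := by
      rw [hder]
      refine (h2 t).hasDerivWithinAt.congr (fun x hx => ?_) ?_
      · rcases eq_or_lt_of_le (mem_Ici.mp hx) with h | h
        · rw [if_pos h.ge, ← h]; exact hval
        · exact if_neg (not_le.mpr h)
      · rw [if_pos le_rfl]; exact hval
    have := hl.union hr
    rwa [Iic_union_Ici, hasDerivWithinAt_univ] at this
  · rw [if_neg (not_le.mpr h)]
    apply (h2 t).congr_of_eventuallyEq
    filter_upwards [Ioi_mem_nhds h] with x hx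
    rw [if_neg (not_le.mpr hx)]

lemma floor_eq_of_mem {T : ℝ} (hT : 0 < T) {x : ℝ} {n : ℤ} (h1 : T * n ≤ x)
    (h2 : x < T * (n + 1)) : ⌊x / T⌋ = n := by
  rw [Int.floor_eq_iff]
  constructor
  · rw [le_div_iff₀ hT]; linarith
  · rw [div_lt_iff₀ hT]; push_cast; linarith

/-- Differentiability of the periodization. -/
lemma periodize_hasDerivAt {f f' : ℝ → ℝ} {T : ℝ} (hT : 0 < T)
    (hf : ∀ t, HasDerivAt f (f' t) t) (hfT : f T = f 0) (hf'T : f' T = f' 0) (t : ℝ) :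
    HasDerivAt (fun x => f (x - T * ⌊x / T⌋)) (f' (t - T * ⌊t / T⌋)) t := by
  have comp : ∀ (c t : ℝ), HasDerivAt (fun x => f (x - c)) (f' (t - c)) t := by
    intro c t
    exact ((hf (t - c)).comp t ((hasDerivAt_id t).sub_const c)).congr_deriv (by simp)
  set n : ℤ := ⌊t / T⌋ with hn
  have hle : T * n ≤ t := by
    have := Int.floor_le (t / T)
    rw [← hn] at this
    calc T * n ≤ T * (t / T) := by nlinarith
    _ = t := by field_simp
  have hlt : t < T * (n + 1) := by
    have := Int.lt_floor_add_one (t / T)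
    rw [← hn] at this
    have : t / T < (n : ℝ) + 1 := by push_cast at this ⊢; linarith
    calc t = T * (t / T) := by field_simp
    _ < T * (n + 1) := by nlinarith
  rcases eq_or_lt_of_le hle with heq | hlt2
  · -- t = T * n, junction point
    have ht0 : t - T * n = 0 := by linarith [heq]
    have hder0 : f' (t - T * n) = f' 0 := by rw [ht0]
    have hl : HasDerivWithinAt (fun x => f (x - T * ⌊x / T⌋)) (f' (t - T * n)) (Iic t) t := by
      rw [hder0, ← hf'T]
      have hT' : f' T = f' (t - T * (n - 1)) := by
        congr 1; push_cast; linarith [heq]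
      rw [hT']
      refine (comp (T * (n - 1)) t).hasDerivWithinAt.congr_of_eventuallyEq ?_ ?_
      · have hmem : Ioi (T * ((n : ℝ) - 1)) ∈ nhdsWithin t (Iic t) :=
          nhdsWithin_le_nhds (Ioi_mem_nhds (by nlinarith [heq]))
        filter_upwards [hmem, self_mem_nhdsWithin] with x hx1 hx2
        rcases eq_or_lt_of_le (mem_Iic.mp hx2) with hxt | hxt
        · rw [hxt]
          have h1 : ⌊t / T⌋ = n := hn.symm
          rw [h1]
          have : t - T * n = 0 := ht0
          rw [this]
          have : t - T * ((n : ℝ) - 1) = T := by push_cast; linarith [heq]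
          rw [this, hfT]
        · have hfl : ⌊x / T⌋ = n - 1 := by
            apply floor_eq_of_mem hT
            · push_cast; linarith [mem_Ioi.mp hx1]
            · push_cast; linarith [heq]
          rw [hfl]; push_cast; ring_nf
      · have h1 : ⌊t / T⌋ = n := hn.symm
        rw [h1, ht0]
        have : t - T * ((n : ℝ) - 1) = T := by push_cast; linarith [heq]
        rw [this, hfT]
    have hr : HasDerivWithinAt (fun x => f (x - T * ⌊x / T⌋)) (f' (t - T * n)) (Ici t) t := by
      refine (comp (T * n) t).hasDerivWithinAt.congr_of_eventuallyEq ?_ ?_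
      · have hmem : Iio (T * ((n : ℝ) + 1)) ∈ nhdsWithin t (Ici t) :=
          nhdsWithin_le_nhds (Iio_mem_nhds (by push_cast; push_cast at hlt; linarith))
        filter_upwards [hmem, self_mem_nhdsWithin] with x hx1 hx2
        have hfl : ⌊x / T⌋ = n := by
          apply floor_eq_of_mem hT
          · linarith [mem_Ici.mp hx2, heq]
          · push_cast; exact mem_Iio.mp hx1
        rw [hfl]
      · rw [← hn]
    have := hl.union hr
    rwa [Iic_union_Ici, hasDerivWithinAt_univ] at this
  · -- interior of tile
    refine (comp (T * n) t).congr_of_eventuallyEq ?_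
    have hmem : Ioo (T * (n : ℝ)) (T * ((n : ℝ) + 1)) ∈ nhds t :=
      Ioo_mem_nhds hlt2 (by push_cast at hlt ⊢; linarith)
    filter_upwards [hmem] with x hx
    have hfl : ⌊x / T⌋ = n := by
      apply floor_eq_of_mem hT
      · exact hx.1.le
      · push_cast; exact hx.2
    rw [hfl]

end Ode13
namespace Ode13

noncomputable def s : ℝ := Real.sqrt 2
noncomputable def T : ℝ := π + π / s

lemma s_pos : 0 < s := Real.sqrt_pos.mpr (by norm_num)
lemma s_sq : s * s = 2 := Real.mul_self_sqrt (by norm_num)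
lemma T_pos : 0 < T := by
  have := Real.pi_pos; have := s_pos
  have : 0 < π / s := div_pos ‹0 < π› s_pos
  unfold T; linarith [Real.pi_pos]
lemma pi_lt_T : π < T := by
  have : 0 < π / s := div_pos Real.pi_pos s_pos
  unfold T; linarith
lemma sT : s * (T - π) = π := by
  unfold T
  field_simp
  rw [add_sub_cancel_left, one_div, mul_inv_cancel₀ s_pos.ne']

noncomputable def g (t : ℝ) : ℝ :=
  if t ≤ π then Real.sin t else -(1/s) * Real.sin (s * (t - π))
noncomputable def g1 (t : ℝ) : ℝ :=
  if t ≤ π then Real.cos t else -Real.cos (s * (t - π))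
noncomputable def g2 (t : ℝ) : ℝ :=
  if t ≤ π then -Real.sin t else s * Real.sin (s * (t - π))

lemma hasDerivAt_B (t : ℝ) :
    HasDerivAt (fun x => -(1/s) * Real.sin (s * (x - π))) (-Real.cos (s * (t - π))) t := by
  have hin : HasDerivAt (fun x : ℝ => s * (x - π)) s t := by
    simpa using ((hasDerivAt_id t).sub_const π).const_mul s
  have := (Real.hasDerivAt_sin (s * (t - π))).comp t hin
  have h2 := this.const_mul (-(1/s))
  refine h2.congr_deriv ?_
  have := s_pos
  field_simp

lemma hasDerivAt_B1 (t : ℝ) :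
    HasDerivAt (fun x => -Real.cos (s * (x - π))) (s * Real.sin (s * (t - π))) t := by
  have hin : HasDerivAt (fun x : ℝ => s * (x - π)) s t := by
    simpa using ((hasDerivAt_id t).sub_const π).const_mul s
  have := ((Real.hasDerivAt_cos (s * (t - π))).comp t hin).neg
  refine this.congr_deriv ?_
  ring

lemma hasDerivAt_g (t : ℝ) : HasDerivAt g (g1 t) t := by
  apply piecewise_hasDerivAt Real.hasDerivAt_sin hasDerivAt_B
  · simp
  · simp

lemma hasDerivAt_g1 (t : ℝ) : HasDerivAt g1 (g2 t) t := by
  apply piecewise_hasDerivAt Real.hasDerivAt_cos hasDerivAt_B1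
  · simp
  · simp

lemma g_T : g T = g 0 := by
  unfold g
  rw [if_neg (not_le.mpr pi_lt_T), if_pos Real.pi_pos.le, sT]
  simp

lemma g1_T : g1 T = g1 0 := by
  unfold g1
  rw [if_neg (not_le.mpr pi_lt_T), if_pos Real.pi_pos.le, sT]
  simp

lemma g2_T : g2 T = g2 0 := by
  unfold g2
  rw [if_neg (not_le.mpr pi_lt_T), if_pos Real.pi_pos.le, sT]
  simp

/-- the ODE identity on one tile -/
lemma tile_eq {u : ℝ} (h0 : 0 ≤ u) (h1 : u < T) : g2 u + g u + min (g u) 0 = 0 := by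
  unfold g g2
  by_cases hu : u ≤ π
  · rw [if_pos hu, if_pos hu]
    have : min (Real.sin u) 0 = 0 :=
      min_eq_right (Real.sin_nonneg_of_nonneg_of_le_pi h0 hu)
    rw [this]; ring
  · rw [if_neg hu, if_neg hu]
    push_neg at hu
    set S := Real.sin (s * (u - π)) with hS
    have hS0 : 0 ≤ S := by
      apply Real.sin_nonneg_of_nonneg_of_le_pi
      · have := s_pos; nlinarith
      · have := s_pos
        calc s * (u - π) ≤ s * (T - π) := by nlinarith
        _ = π := sT
    have hmin : min (-(1/s) * S) 0 = -(1/s) * S := by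
      apply min_eq_left
      have := s_pos
      have h1s : 0 ≤ 1/s := by positivity
      nlinarith
    rw [hmin]
    have h2 := s_sq
    have := s_pos
    field_simp
    nlinarith

end Ode13
namespace Ode13

noncomputable def q (t : ℝ) : ℝ := g (t - T * ⌊t / T⌋)
noncomputable def p (t : ℝ) : ℝ := g1 (t - T * ⌊t / T⌋)
noncomputable def r (t : ℝ) : ℝ := g2 (t - T * ⌊t / T⌋)

lemma q_periodic (t : ℝ) : q (t + T) = q t := by
  unfold q
  have h : (t + T) / T = t / T + 1 := by rw [add_div, div_self T_pos.ne']
  rw [h, Int.floor_add_one]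
  congr 1
  push_cast
  ring

lemma hasDerivAt_q (t : ℝ) : HasDerivAt q (p t) t :=
  periodize_hasDerivAt T_pos hasDerivAt_g g_T g1_T t

lemma hasDerivAt_p (t : ℝ) : HasDerivAt p (r t) t :=
  periodize_hasDerivAt T_pos hasDerivAt_g1 g1_T g2_T t

lemma deriv_q : deriv q = p := funext fun t => (hasDerivAt_q t).deriv

lemma frac_mem (t : ℝ) : 0 ≤ t - T * ⌊t / T⌋ ∧ t - T * ⌊t / T⌋ < T := by
  have hT := T_pos
  have h1 : (⌊t / T⌋ : ℝ) ≤ t / T := Int.floor_le _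
  have h2 : t / T < ⌊t / T⌋ + 1 := Int.lt_floor_add_one _
  constructor
  · have : T * (⌊t / T⌋ : ℝ) ≤ T * (t / T) := by nlinarith
    have ht : T * (t / T) = t := by field_simp
    linarith [ht ▸ this]
  · have : T * (t / T) < T * ((⌊t / T⌋ : ℝ) + 1) := by nlinarith
    have ht : T * (t / T) = t := by field_simp
    nlinarith [ht ▸ this]

lemma ode_eq (t : ℝ) : r t + q t + min (q t) 0 = 0 := by
  unfold r q
  exact tile_eq (frac_mem t).1 (frac_mem t).2

lemma q_eq_g : ∀ t ∈ Set.uIcc (0:ℝ) T, q t = g t := by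
  intro t ht
  rw [Set.uIcc_of_le T_pos.le] at ht
  unfold q
  rcases eq_or_lt_of_le ht.2 with h | h
  · subst h
    have : ⌊T / T⌋ = 1 := by rw [div_self T_pos.ne']; norm_num
    rw [this]
    push_cast
    rw [show T - T * 1 = 0 by ring, g_T.symm]
  · have : ⌊t / T⌋ = 0 := floor_eq_of_mem T_pos (by simpa using ht.1) (by simpa using h)
    rw [this]
    norm_num

lemma integral_q : (∫ t in (0:ℝ)..T, q t) = 1 := by
  have hcont : Continuous g := by
    have hd : Differentiable ℝ g := fun t => (hasDerivAt_g t).differentiableAt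
    exact hd.continuous
  rw [intervalIntegral.integral_congr q_eq_g]
  have hsplit : (∫ t in (0:ℝ)..π, g t) + (∫ t in π..T, g t) = ∫ t in (0:ℝ)..T, g t :=
    intervalIntegral.integral_add_adjacent_intervals
      (hcont.intervalIntegrable _ _) (hcont.intervalIntegrable _ _)
  rw [← hsplit]
  have h1 : (∫ t in (0:ℝ)..π, g t) = 2 := by
    have : ∀ t ∈ Set.uIcc (0:ℝ) π, g t = Real.sin t := by
      intro t ht
      rw [Set.uIcc_of_le Real.pi_pos.le] at ht
      exact if_pos ht.2
    rw [intervalIntegral.integral_congr this, integral_sin]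
    simp
    norm_num
  have h2 : (∫ t in π..T, g t) = -1 := by
    have hB : ∀ t ∈ Set.uIcc π T, g t = -(1/s) * Real.sin (s * (t - π)) := by
      intro t ht
      rw [Set.uIcc_of_le pi_lt_T.le] at ht
      rcases eq_or_lt_of_le ht.1 with h | h
      · rw [← h]; unfold g; rw [if_pos le_rfl]; simp
      · exact if_neg (not_le.mpr h)
    rw [intervalIntegral.integral_congr hB]
    have hF : ∀ t ∈ Set.uIcc π T,
        HasDerivAt (fun x => (1/(s*s)) * Real.cos (s * (x - π)))
          (-(1/s) * Real.sin (s * (t - π))) t := by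
      intro t _
      have hin : HasDerivAt (fun x : ℝ => s * (x - π)) s t := by
        simpa using ((hasDerivAt_id t).sub_const π).const_mul s
      have := ((Real.hasDerivAt_cos (s * (t - π))).comp t hin).const_mul (1/(s*s))
      refine this.congr_deriv ?_
      have := s_pos
      field_simp
    have hint : IntervalIntegrable (fun t => -(1/s) * Real.sin (s * (t - π)))
        MeasureTheory.volume π T := by
      apply Continuous.intervalIntegrable
      continuity
    rw [intervalIntegral.integral_eq_sub_of_hasDerivAt hF hint, sT]
    have h2 := s_sq
    simp [h2]
    norm_num
  rw [h1, h2]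
  norm_num

end Ode13

/-- the ODE q'' + q + min(q,0) = 0 admits periodic solutions with
nonzero average over their period. -/
theorem ode_periodic_solution_nonzero_average :
    ∃ T : ℝ, 0 < T ∧ ∃ q : ℝ → ℝ,
      (∀ t : ℝ, q (t + T) = q t) ∧
      Differentiable ℝ q ∧
      Differentiable ℝ (deriv q) ∧
      (∀ t : ℝ, deriv (deriv q) t + q t + min (q t) 0 = 0) ∧
      (∫ t in (0 : ℝ)..T, q t) ≠ 0 := by
  refine ⟨Ode13.T, Ode13.T_pos, Ode13.q, Ode13.q_periodic, ?_, ?_, ?_, ?_⟩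
  · exact fun t => (Ode13.hasDerivAt_q t).differentiableAt
  · rw [Ode13.deriv_q]
    exact fun t => (Ode13.hasDerivAt_p t).differentiableAt
  · intro t
    rw [Ode13.deriv_q, (Ode13.hasDerivAt_p t).deriv]
    exact Ode13.ode_eq t
  · rw [Ode13.integral_q]
    norm_num
end
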